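/- Let n ≥ 1 and let Y be an n-digit Benford random variable taking values in the positive reals such that X = log₁₀ Y has a probability density function. Then for all digits d₁ ∈ {1,…,9}, d₂,…,dₙ ∈ {0,…,9}, with xₙ = 10^{n−1}d₁ + 10^{n−2}d₂ + ⋯ + dₙ, the expected significand sum satisfies 10^{1−n} · xₙ · log₁₀(1 + 1/xₙ) ≤ E[S_{d₁⋯dₙ} Y] ≤ 10^{1−n} · (xₙ + 1) · log₁₀(1 + 1/xₙ). -/

import Mathlib

/-! On the event that the first `n` digits of `Y` are `d`, the significand lies in
`[10^(1-n) xₙ, 10^(1-n) (xₙ + 1)]`, and by the Benford property that event has probability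
`log₁₀ (1 + 1/xₙ)`; integrating the pointwise bounds over it gives the claim. -/

open MeasureTheory Real

/-- The base-10 significand `S(y) = 10 ^ (log₁₀ y − ⌊log₁₀ y⌋) ∈ [1,10)`. -/
noncomputable def signif (y : ℝ) : ℝ :=
  (10 : ℝ) ^ (Real.logb 10 y - (⌊Real.logb 10 y⌋ : ℝ))

/-- `d : Fin n → ℕ` is a valid digit tuple: every digit is at most 9 and the
leading digit (index 0) is at least 1. -/
def IsDigitTuple (n : ℕ) (d : Fin n → ℕ) : Prop :=
  (∀ i, d i ≤ 9) ∧ ∀ i : Fin n, (i : ℕ) = 0 → 1 ≤ d i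

/-- `xₙ = 10^(n−1) d₁ + 10^(n−2) d₂ + ⋯ + dₙ` for a digit tuple `d`. -/
def digitVal (n : ℕ) (d : Fin n → ℕ) : ℕ :=
  ∑ i : Fin n, d i * 10 ^ (n - 1 - (i : ℕ))

/-- `y > 0` has first `n` significant digits given by the tuple `d` iff
`⌊10^(n−1) · S(y)⌋ = xₙ`. -/
def HasFirstDigits (n : ℕ) (d : Fin n → ℕ) (y : ℝ) : Prop :=
  ⌊(10 : ℝ) ^ (n - 1) * signif y⌋ = (digitVal n d : ℤ)

/-- A random variable `Y` on `(Ω, P)` is `n`-digit Benford if for every valid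
digit tuple `d`, the probability that the first `n` significant digits of `Y`
are `d₁, …, dₙ` equals `log₁₀ (1 + 1/xₙ)`. -/
def NDigitBenford {Ω : Type*} [MeasurableSpace Ω] (P : Measure Ω) (Y : Ω → ℝ)
    (n : ℕ) : Prop :=
  ∀ d : Fin n → ℕ, IsDigitTuple n d →
    P {ω | HasFirstDigits n d (Y ω)}
      = ENNReal.ofReal (Real.logb 10 (1 + 1 / (digitVal n d : ℝ)))

/-- The expected significand sum `E[S_{d₁⋯dₙ} Y]`: the expectation of `S(Y)`
restricted to the event that the first `n` significant digits of `Y` are `d`. -/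
noncomputable def expSignifSum {Ω : Type*} [MeasurableSpace Ω] (P : Measure Ω)
    (Y : Ω → ℝ) (n : ℕ) (d : Fin n → ℕ) : ℝ :=
  ∫ ω, Set.indicator {ω | HasFirstDigits n d (Y ω)} (fun ω => signif (Y ω)) ω ∂P

open Set

theorem measurable_signif : Measurable signif := by
  have hlogb : Measurable fun y : ℝ => logb 10 y := measurable_log.div_const _
  show Measurable fun y => (10 : ℝ) ^ Int.fract (logb 10 y)
  exact measurable_const.pow (measurable_fract.comp hlogb)

theorem measurableSet_hasFirstDigits (n : ℕ) (d : Fin n → ℕ) :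
    MeasurableSet {y | HasFirstDigits n d y} :=
  (measurable_const.mul measurable_signif).floor (measurableSet_singleton _)

theorem zpow_one_sub_mul_pow_sub_one {K : Type*} [DivisionRing K] {a : K} (ha : a ≠ 0) {n : ℕ}
    (hn : 1 ≤ n) : a ^ ((1 : ℤ) - n) * a ^ (n - 1) = 1 := by
  rw [← zpow_natCast, ← zpow_add₀ ha]
  simp [Nat.cast_sub hn]

theorem signif_mem_Icc_of_hasFirstDigits {n : ℕ} (hn : 1 ≤ n) {d : Fin n → ℕ} {y : ℝ}
    (h : HasFirstDigits n d y) :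
    signif y ∈ Icc ((10 : ℝ) ^ ((1 : ℤ) - n) * digitVal n d)
      ((10 : ℝ) ^ ((1 : ℤ) - n) * (digitVal n d + 1)) := by
  rw [HasFirstDigits, Int.floor_eq_iff] at h
  push_cast at h
  have hsignif : signif y = (10 : ℝ) ^ ((1 : ℤ) - n) * ((10 : ℝ) ^ (n - 1) * signif y) := by
    rw [← mul_assoc, zpow_one_sub_mul_pow_sub_one (by norm_num) hn, one_mul]
  rw [hsignif]
  exact ⟨by gcongr; exact h.1, by gcongr; exact h.2.le⟩

theorem setIntegral_mem_Icc_of_mem_Icc {X : Type*} [MeasurableSpace X] {μ : Measure X}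
    {s : Set X} {f : X → ℝ} {a b : ℝ} (hs : MeasurableSet s) (hμs : μ s ≠ ⊤)
    (hf : AEStronglyMeasurable f μ) (hab : ∀ x ∈ s, f x ∈ Icc a b) :
    ∫ x in s, f x ∂μ ∈ Icc (a * μ.real s) (b * μ.real s) := by
  have hint : IntegrableOn f s μ := by
    refine .of_bound hμs.lt_top hf.restrict (max |a| |b|) ?_
    filter_upwards [ae_restrict_mem hs] with x hx
    exact abs_le_max_abs_abs (hab x hx).1 (hab x hx).2
  refine ⟨setIntegral_ge_of_const_le_real hs hμs (fun x hx => (hab x hx).1) hint, ?_⟩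
  calc ∫ x in s, f x ∂μ ≤ ∫ _ in s, b ∂μ :=
        setIntegral_mono_on hint (integrableOn_const hμs) hs fun x hx => (hab x hx).2
    _ = b * μ.real s := by rw [setIntegral_const, smul_eq_mul, mul_comm]

theorem NDigitBenford.measureReal_eq {Ω : Type*} [MeasurableSpace Ω] {P : Measure Ω}
    {Y : Ω → ℝ} {n : ℕ} (hben : NDigitBenford P Y n) {d : Fin n → ℕ} (hd : IsDigitTuple n d) :
    P.real {ω | HasFirstDigits n d (Y ω)} = logb 10 (1 + 1 / (digitVal n d : ℝ)) := by
  rw [measureReal_def, hben d hd, ENNReal.toReal_ofReal]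
  exact logb_nonneg (by norm_num) (le_add_of_nonneg_right (by positivity))

theorem expSignifSum_bounds_general {Ω : Type*} [MeasurableSpace Ω]
    (P : Measure Ω) (Y : Ω → ℝ) (hY : Measurable Y)
    (n : ℕ) (hn : 1 ≤ n) (hben : NDigitBenford P Y n)
    (d : Fin n → ℕ) (hd : IsDigitTuple n d) :
    (10 : ℝ) ^ ((1 : ℤ) - (n : ℤ)) * (digitVal n d : ℝ) *
        Real.logb 10 (1 + 1 / (digitVal n d : ℝ))
      ≤ expSignifSum P Y n d ∧
    expSignifSum P Y n d
      ≤ (10 : ℝ) ^ ((1 : ℤ) - (n : ℤ)) * ((digitVal n d : ℝ) + 1) *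
          Real.logb 10 (1 + 1 / (digitVal n d : ℝ)) := by
  have hA : MeasurableSet {ω | HasFirstDigits n d (Y ω)} :=
    hY (measurableSet_hasFirstDigits n d)
  have hbounds := setIntegral_mem_Icc_of_mem_Icc (μ := P) hA (by simp [hben d hd])
    (measurable_signif.comp hY).aestronglyMeasurable
    fun ω hω => signif_mem_Icc_of_hasFirstDigits hn hω
  rwa [hben.measureReal_eq hd, ← integral_indicator hA] at hbounds

/-- **Bounds on the expected significand sum of an `n`-digit Benford variable.**
If `Y` is `n`-digit Benford and `X = log₁₀ Y` has a probability density
function, then for every digit tuple `d₁, …, dₙ` with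
`xₙ = 10^(n−1) d₁ + ⋯ + dₙ`,
`10^(1−n) xₙ log₁₀(1 + 1/xₙ) ≤ E[S_{d₁⋯dₙ} Y] ≤ 10^(1−n) (xₙ+1) log₁₀(1 + 1/xₙ)`. -/
theorem expSignifSum_bounds {Ω : Type*} [MeasurableSpace Ω]
    (P : Measure Ω) [IsProbabilityMeasure P] (Y : Ω → ℝ) (hY : Measurable Y)
    (hYpos : ∀ ω, 0 < Y ω)
    (hpdf : ∃ g : ℝ → ℝ, (∀ x, 0 ≤ g x) ∧ Integrable g ∧
      P.map (fun ω => Real.logb 10 (Y ω))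
        = volume.withDensity (fun x => ENNReal.ofReal (g x)))
    (n : ℕ) (hn : 1 ≤ n) (hben : NDigitBenford P Y n)
    (d : Fin n → ℕ) (hd : IsDigitTuple n d) :
    (10 : ℝ) ^ ((1 : ℤ) - (n : ℤ)) * (digitVal n d : ℝ) *
        Real.logb 10 (1 + 1 / (digitVal n d : ℝ))
      ≤ expSignifSum P Y n d ∧
    expSignifSum P Y n d
      ≤ (10 : ℝ) ^ ((1 : ℤ) - (n : ℤ)) * ((digitVal n d : ℝ) + 1) *
          Real.logb 10 (1 + 1 / (digitVal n d : ℝ)) :=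
  expSignifSum_bounds_general P Y hY n hn hben d hd
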